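/- arXiv:2506.18338 — 8 statements merged into one kernel-verified Lean document; each statement's English description precedes it below -/
import Mathlib

section
/- Let (j1,j2,j3) be an admissible triple and let a,b ∈ {−1,+1}. Then K_{a,b}(j1,j2,j3) ≠ 0 if and only if the triple (j1+a, j2+b, j3) is admissible (in particular K_{a,b}(j1,j2,j3) = 0 whenever j1+a < 0 or j2+b < 0). -/
/-- A triple of integers is *admissible* if all entries are nonnegative,
the triangle inequality `|j1 - j2| ≤ j3 ≤ j1 + j2` holds, and `j1+j2+j3` is even. -/
def Admissible (j : ℤ × ℤ × ℤ) : Prop :=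
  0 ≤ j.1 ∧ 0 ≤ j.2.1 ∧ 0 ≤ j.2.2 ∧
  |j.1 - j.2.1| ≤ j.2.2 ∧ j.2.2 ≤ j.1 + j.2.1 ∧ 2 ∣ (j.1 + j.2.1 + j.2.2)

/-- The Pieri coefficient
`K_{a,b}(j1,j2,j3) = a·b·(a·j1+b·j2+j3+a+b+2)·(a·j1+b·j2−j3+a+b) / (4·(j1+1)·(j2+1))`
as a rational number. -/
def Kq (a b j1 j2 j3 : ℤ) : ℚ :=
  ((a * b : ℤ) : ℚ) *
    (((a*j1 + b*j2 + j3 + a + b + 2 : ℤ) : ℚ) * ((a*j1 + b*j2 - j3 + a + b : ℤ) : ℚ)) /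
    (4 * ((j1 : ℚ) + 1) * ((j2 : ℚ) + 1))

/-!
The denominator of `K_{a,b}` is positive and `a·b = ±1`, so `K_{a,b}` vanishes exactly when one
of its two linear factors does. The shift by `(a,b)` preserves parity, and it leaves the
admissible region precisely when a triangle inequality for `(j1,j2,j3)` that the shift tightens
is already an equality; by parity this happens exactly when one of the factors is zero.
-/

lemma Kq_ne_zero_iff {a b j1 j2 j3 : ℤ} (hab : a * b ≠ 0) (hj1 : 0 ≤ j1) (hj2 : 0 ≤ j2) :
    Kq a b j1 j2 j3 ≠ 0 ↔
      a * j1 + b * j2 + j3 + a + b + 2 ≠ 0 ∧ a * j1 + b * j2 - j3 + a + b ≠ 0 := by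
  have hd1 : (j1 : ℚ) + 1 ≠ 0 := by positivity
  have hd2 : (j2 : ℚ) + 1 ≠ 0 := by positivity
  simp only [Kq, ne_eq, div_eq_zero_iff, mul_eq_zero, Int.cast_eq_zero, hab, hd1, hd2,
    OfNat.ofNat_ne_zero, false_or, or_false, not_or]

lemma admissible_add_iff {a b j1 j2 j3 : ℤ} (ha : a = 1 ∨ a = -1) (hb : b = 1 ∨ b = -1)
    (hadm : Admissible (j1, j2, j3)) :
    Admissible (j1 + a, j2 + b, j3) ↔
      a * j1 + b * j2 + j3 + a + b + 2 ≠ 0 ∧ a * j1 + b * j2 - j3 + a + b ≠ 0 := by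
  simp only [Admissible, abs_le] at hadm ⊢
  rcases ha with rfl | rfl <;> rcases hb with rfl | rfl <;> omega

/-- For an admissible triple `(j1,j2,j3)` and `a, b ∈ {−1,+1}`,
the coefficient `K_{a,b}(j1,j2,j3)` is nonzero if and only if the triple
`(j1+a, j2+b, j3)` is admissible. -/
theorem K_ne_zero_iff_admissible (a b j1 j2 j3 : ℤ)
    (ha : a = 1 ∨ a = -1) (hb : b = 1 ∨ b = -1)
    (hadm : Admissible (j1, j2, j3)) :
    Kq a b j1 j2 j3 ≠ 0 ↔ Admissible (j1 + a, j2 + b, j3) := by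
  have hab : a * b ≠ 0 := mul_ne_zero (by omega) (by omega)
  rw [Kq_ne_zero_iff hab hadm.1 hadm.2.1, admissible_add_iff ha hb hadm]
end

section
/- Let (φ_{j1,j2,j3}) be a family satisfying the genus-two Pieri rule with φ_{0,0,0} = 1. Then for every admissible triple (j1,j2,j3) and every permutation σ of {1,2,3}, the Laurent polynomial φ_{j1,j2,j3}(x12, x13, x23) equals φ_{j_{σ(1)}, j_{σ(2)}, j_{σ(3)}}(x_{σ(1)σ(2)}, x_{σ(1)σ(3)}, x_{σ(2)σ(3)}), where x_{ji} denotes x_{ij} when i < j; i.e. the family is symmetric under simultaneous permutations of the indices (j1,j2,j3) and of the variables (x12,x13,x23). -/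
/-- Pieri coefficient `K_{a,b}(j1,j2,j3)` as a complex number. -/
noncomputable def Kc (a b j1 j2 j3 : ℤ) : ℂ :=
  ((a * b : ℤ) : ℂ) *
    (((a*j1 + b*j2 + j3 + a + b + 2 : ℤ) : ℂ) * ((a*j1 + b*j2 - j3 + a + b : ℤ) : ℂ)) /
    (4 * ((j1 : ℂ) + 1) * ((j2 : ℂ) + 1))

/-- Laurent polynomials in three variables, as finitely supported
coefficient functions on the exponent lattice `ℤ³`.  The coordinates of a
monomial `m` are the exponents of `x12`, `x13`, `x23` respectively. -/
abbrev LP := (ℤ × ℤ × ℤ) →₀ ℂ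

/-- Multiplication of a Laurent polynomial by the monomial `x^e`. -/
noncomputable def shiftLP (e : ℤ × ℤ × ℤ) (p : LP) : LP :=
  Finsupp.mapDomain (fun m => e + m) p

/-- Membership in `H`: invariance under each inversion `x_{ij} ↦ x_{ij}⁻¹`. -/
def InvariantH (p : LP) : Prop :=
  (∀ m : ℤ × ℤ × ℤ, p (-m.1, m.2.1, m.2.2) = p m) ∧
  (∀ m : ℤ × ℤ × ℤ, p (m.1, -m.2.1, m.2.2) = p m) ∧
  (∀ m : ℤ × ℤ × ℤ, p (m.1, m.2.1, -m.2.2) = p m)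

/-- A family `φ` (defined for all integer triples, vanishing on non-admissible ones,
with values in `H`) satisfies the genus-two Pieri rule with `φ_{0,0,0} = 1`. -/
structure IsPieriFamily (φ : ℤ × ℤ × ℤ → LP) : Prop where
  zero_of_not_admissible : ∀ j, ¬ Admissible j → φ j = 0
  mem_H : ∀ j, InvariantH (φ j)
  init : φ (0, 0, 0) = Finsupp.single (0, 0, 0) 1
  pieri12 : ∀ j1 j2 j3 : ℤ, Admissible (j1, j2, j3) →
    shiftLP (1, 0, 0) (φ (j1, j2, j3)) + shiftLP (-1, 0, 0) (φ (j1, j2, j3)) =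
      Kc 1 1 j1 j2 j3 • φ (j1+1, j2+1, j3) + Kc 1 (-1) j1 j2 j3 • φ (j1+1, j2-1, j3) +
      Kc (-1) 1 j1 j2 j3 • φ (j1-1, j2+1, j3) + Kc (-1) (-1) j1 j2 j3 • φ (j1-1, j2-1, j3)
  pieri13 : ∀ j1 j2 j3 : ℤ, Admissible (j1, j2, j3) →
    shiftLP (0, 1, 0) (φ (j1, j2, j3)) + shiftLP (0, -1, 0) (φ (j1, j2, j3)) =
      Kc 1 1 j1 j3 j2 • φ (j1+1, j2, j3+1) + Kc 1 (-1) j1 j3 j2 • φ (j1+1, j2, j3-1) +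
      Kc (-1) 1 j1 j3 j2 • φ (j1-1, j2, j3+1) + Kc (-1) (-1) j1 j3 j2 • φ (j1-1, j2, j3-1)
  pieri23 : ∀ j1 j2 j3 : ℤ, Admissible (j1, j2, j3) →
    shiftLP (0, 0, 1) (φ (j1, j2, j3)) + shiftLP (0, 0, -1) (φ (j1, j2, j3)) =
      Kc 1 1 j2 j3 j1 • φ (j1, j2+1, j3+1) + Kc 1 (-1) j2 j3 j1 • φ (j1, j2+1, j3-1) +
      Kc (-1) 1 j2 j3 j1 • φ (j1, j2-1, j3+1) + Kc (-1) (-1) j2 j3 j1 • φ (j1, j2-1, j3-1)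

lemma admissible_iff (a b c : ℤ) : Admissible (a, b, c) ↔
    0 ≤ a ∧ 0 ≤ b ∧ 0 ≤ c ∧ b - a ≤ c ∧ a - b ≤ c ∧ c ≤ a + b ∧ 2 ∣ a + b + c := by
  simp only [Admissible, abs_le]
  omega

lemma admissible_swap_left {a b c : ℤ} : Admissible (b, a, c) ↔ Admissible (a, b, c) := by
  simp only [admissible_iff]
  omega

lemma admissible_swap_right {a b c : ℤ} : Admissible (a, c, b) ↔ Admissible (a, b, c) := by
  simp only [admissible_iff]
  omega

lemma Admissible.exists_pred {a b c : ℤ} (h : Admissible (a, b, c)) (h0 : a + b + c ≠ 0) :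
    Admissible (a - 1, b - 1, c) ∨ Admissible (a - 1, b, c - 1) ∨
      Admissible (a, b - 1, c - 1) := by
  simp only [admissible_iff] at h ⊢
  omega

lemma Kc_comm (a b j1 j2 j3 : ℤ) : Kc a b j1 j2 j3 = Kc b a j2 j1 j3 := by
  unfold Kc
  push_cast
  ring

lemma Kc_one_one_ne_zero {j1 j2 j3 : ℤ} (h : Admissible (j1, j2, j3)) :
    Kc 1 1 j1 j2 j3 ≠ 0 := by
  rw [admissible_iff] at h
  have hcast : ∀ m : ℤ, 0 < m → (m : ℂ) ≠ 0 := fun m hm => Int.cast_ne_zero.mpr hm.ne'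
  have h1 := hcast (j1 + 1) (by omega)
  have h2 := hcast (j2 + 1) (by omega)
  push_cast at h1 h2
  unfold Kc
  exact div_ne_zero (mul_ne_zero (by norm_num)
    (mul_ne_zero (hcast _ (by omega)) (hcast _ (by omega))))
    (mul_ne_zero (mul_ne_zero (by norm_num) h1) h2)

lemma shiftLP_apply (e : ℤ × ℤ × ℤ) (p : LP) (x : ℤ × ℤ × ℤ) : shiftLP e p x = p (x - e) := by
  rw [shiftLP, ← add_sub_cancel e x, Finsupp.mapDomain_apply (add_right_injective e),
    add_sub_cancel_left]

lemma eq_of_pieri_step {e e' : ℤ × ℤ × ℤ} {K₁ K₂ K₃ K₄ : ℂ} (hK : K₁ ≠ 0)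
    {p q x y a a' b b' c c' : LP}
    (hp : shiftLP e p + shiftLP e' p = K₁ • x + K₂ • a + K₃ • b + K₄ • c)
    (hq : shiftLP e q + shiftLP e' q = K₁ • y + K₂ • a' + K₃ • b' + K₄ • c')
    (hpq : p = q) (ha : a = a') (hb : b = b') (hc : c = c') : x = y := by
  subst hpq ha hb hc
  exact smul_right_injective LP hK (by simpa using hp.symm.trans hq)

-- On monomials `(m12, m13, m23)`, transposing `j1, j2` transposes `x13, x23`, and
-- transposing `j2, j3` transposes `x12, x13`.
noncomputable def relabel01 (φ : ℤ × ℤ × ℤ → LP) (k : ℤ × ℤ × ℤ) : LP :=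
  (φ (k.2.1, k.1, k.2.2)).equivMapDomain
    (Function.Involutive.toPerm (fun m : ℤ × ℤ × ℤ => (m.1, m.2.2, m.2.1)) fun _ => rfl)

noncomputable def relabel12 (φ : ℤ × ℤ × ℤ → LP) (k : ℤ × ℤ × ℤ) : LP :=
  (φ (k.1, k.2.2, k.2.1)).equivMapDomain
    (Function.Involutive.toPerm (fun m : ℤ × ℤ × ℤ => (m.2.1, m.1, m.2.2)) fun _ => rfl)

lemma relabel01_apply (φ : ℤ × ℤ × ℤ → LP) (k1 k2 k3 x1 x2 x3 : ℤ) :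
    relabel01 φ (k1, k2, k3) (x1, x2, x3) = φ (k2, k1, k3) (x1, x3, x2) := rfl

lemma relabel12_apply (φ : ℤ × ℤ × ℤ → LP) (k1 k2 k3 x1 x2 x3 : ℤ) :
    relabel12 φ (k1, k2, k3) (x1, x2, x3) = φ (k1, k3, k2) (x2, x1, x3) := rfl

def symmetries (φ : ℤ × ℤ × ℤ → LP) : Submonoid (Equiv.Perm (Fin 3)) where
  carrier := {τ | ∀ j n : Fin 3 → ℤ,
    φ (j (τ 0), j (τ 1), j (τ 2)) (n (τ 2), n (τ 1), n (τ 0)) = φ (j 0, j 1, j 2) (n 2, n 1, n 0)}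
  one_mem' _ _ := rfl
  mul_mem' {σ _} hσ hτ j n := (hτ (j ∘ σ) (n ∘ σ)).trans (hσ j n)

namespace IsPieriFamily

variable {φ ψ : ℤ × ℤ × ℤ → LP}

lemma eq_of_eq_of_sum_lt (hφ : IsPieriFamily φ) (hψ : IsPieriFamily ψ) {k1 k2 k3 : ℤ}
    (hk : Admissible (k1, k2, k3)) (h0 : k1 + k2 + k3 ≠ 0)
    (lower : ∀ t1 t2 t3, t1 + t2 + t3 < k1 + k2 + k3 → φ (t1, t2, t3) = ψ (t1, t2, t3)) :
    φ (k1, k2, k3) = ψ (k1, k2, k3) := by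
  rcases hk.exists_pred h0 with hi | hi | hi
  · obtain ⟨i1, rfl⟩ : ∃ i, k1 = i + 1 := ⟨k1 - 1, by ring⟩
    obtain ⟨i2, rfl⟩ : ∃ i, k2 = i + 1 := ⟨k2 - 1, by ring⟩
    simp only [add_sub_cancel_right] at hi
    exact eq_of_pieri_step (Kc_one_one_ne_zero hi) (hφ.pieri12 i1 i2 k3 hi)
      (hψ.pieri12 i1 i2 k3 hi) (lower _ _ _ (by omega)) (lower _ _ _ (by omega))
      (lower _ _ _ (by omega)) (lower _ _ _ (by omega))
  · obtain ⟨i1, rfl⟩ : ∃ i, k1 = i + 1 := ⟨k1 - 1, by ring⟩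
    obtain ⟨i3, rfl⟩ : ∃ i, k3 = i + 1 := ⟨k3 - 1, by ring⟩
    simp only [add_sub_cancel_right] at hi
    exact eq_of_pieri_step (Kc_one_one_ne_zero (admissible_swap_right.mp hi))
      (hφ.pieri13 i1 k2 i3 hi) (hψ.pieri13 i1 k2 i3 hi) (lower _ _ _ (by omega))
      (lower _ _ _ (by omega)) (lower _ _ _ (by omega)) (lower _ _ _ (by omega))
  · obtain ⟨i2, rfl⟩ : ∃ i, k2 = i + 1 := ⟨k2 - 1, by ring⟩
    obtain ⟨i3, rfl⟩ : ∃ i, k3 = i + 1 := ⟨k3 - 1, by ring⟩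
    simp only [add_sub_cancel_right] at hi
    exact eq_of_pieri_step
      (Kc_one_one_ne_zero (admissible_swap_right.mp (admissible_swap_left.mp hi)))
      (hφ.pieri23 k1 i2 i3 hi) (hψ.pieri23 k1 i2 i3 hi) (lower _ _ _ (by omega))
      (lower _ _ _ (by omega)) (lower _ _ _ (by omega)) (lower _ _ _ (by omega))

theorem unique (hφ : IsPieriFamily φ) (hψ : IsPieriFamily ψ) : φ = ψ := by
  suffices ∀ N : ℕ, ∀ k1 k2 k3 : ℤ, (k1 + k2 + k3).toNat = N →
      φ (k1, k2, k3) = ψ (k1, k2, k3) from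
    funext fun ⟨k1, k2, k3⟩ => this _ k1 k2 k3 rfl
  intro N
  induction N using Nat.strong_induction_on with
  | _ N IH =>
    rintro k1 k2 k3 rfl
    by_cases hk : Admissible (k1, k2, k3)
    · by_cases h0 : k1 + k2 + k3 = 0
      · obtain ⟨rfl, rfl, rfl⟩ : k1 = 0 ∧ k2 = 0 ∧ k3 = 0 := by
          rw [admissible_iff] at hk; omega
        rw [hφ.init, hψ.init]
      refine hφ.eq_of_eq_of_sum_lt hψ hk h0 fun t1 t2 t3 ht => ?_
      by_cases ht' : Admissible (t1, t2, t3)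
      · have := (admissible_iff _ _ _).mp ht'
        exact IH _ (by omega) _ _ _ rfl
      · rw [hφ.zero_of_not_admissible _ ht', hψ.zero_of_not_admissible _ ht']
    · rw [hφ.zero_of_not_admissible _ hk, hψ.zero_of_not_admissible _ hk]

theorem relabel01 (hφ : IsPieriFamily φ) : IsPieriFamily (relabel01 φ) where
  zero_of_not_admissible := by
    rintro ⟨k1, k2, k3⟩ h
    ext ⟨x1, x2, x3⟩
    rw [relabel01_apply, hφ.zero_of_not_admissible _ (mt admissible_swap_left.mp h)]
    rfl
  mem_H := by
    rintro ⟨k1, k2, k3⟩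
    obtain ⟨h1, h2, h3⟩ := hφ.mem_H (k2, k1, k3)
    exact ⟨fun m => h1 (m.1, m.2.2, m.2.1), fun m => h3 (m.1, m.2.2, m.2.1),
      fun m => h2 (m.1, m.2.2, m.2.1)⟩
  init := by
    rw [_root_.relabel01, hφ.init, Finsupp.equivMapDomain_single]
    rfl
  pieri12 j1 j2 j3 h := by
    ext ⟨x1, x2, x3⟩
    have H := congr($(hφ.pieri12 j2 j1 j3 (admissible_swap_left.mpr h)) (x1, x3, x2))
    simp only [Finsupp.add_apply, Finsupp.smul_apply, smul_eq_mul, shiftLP_apply,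
      relabel01_apply, Prod.mk_sub_mk, sub_zero, sub_neg_eq_add] at H ⊢
    simp only [Kc_comm _ _ j1 j2 j3]
    linear_combination H
  pieri13 j1 j2 j3 h := by
    ext ⟨x1, x2, x3⟩
    have H := congr($(hφ.pieri23 j2 j1 j3 (admissible_swap_left.mpr h)) (x1, x3, x2))
    simp only [Finsupp.add_apply, Finsupp.smul_apply, smul_eq_mul, shiftLP_apply,
      relabel01_apply, Prod.mk_sub_mk, sub_zero, sub_neg_eq_add] at H ⊢
    linear_combination H
  pieri23 j1 j2 j3 h := by
    ext ⟨x1, x2, x3⟩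
    have H := congr($(hφ.pieri13 j2 j1 j3 (admissible_swap_left.mpr h)) (x1, x3, x2))
    simp only [Finsupp.add_apply, Finsupp.smul_apply, smul_eq_mul, shiftLP_apply,
      relabel01_apply, Prod.mk_sub_mk, sub_zero, sub_neg_eq_add] at H ⊢
    linear_combination H

theorem relabel12 (hφ : IsPieriFamily φ) : IsPieriFamily (relabel12 φ) where
  zero_of_not_admissible := by
    rintro ⟨k1, k2, k3⟩ h
    ext ⟨x1, x2, x3⟩
    rw [relabel12_apply, hφ.zero_of_not_admissible _ (mt admissible_swap_right.mp h)]
    rfl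
  mem_H := by
    rintro ⟨k1, k2, k3⟩
    obtain ⟨h1, h2, h3⟩ := hφ.mem_H (k1, k3, k2)
    exact ⟨fun m => h2 (m.2.1, m.1, m.2.2), fun m => h1 (m.2.1, m.1, m.2.2),
      fun m => h3 (m.2.1, m.1, m.2.2)⟩
  init := by
    rw [_root_.relabel12, hφ.init, Finsupp.equivMapDomain_single]
    rfl
  pieri12 j1 j2 j3 h := by
    ext ⟨x1, x2, x3⟩
    have H := congr($(hφ.pieri13 j1 j3 j2 (admissible_swap_right.mpr h)) (x2, x1, x3))
    simp only [Finsupp.add_apply, Finsupp.smul_apply, smul_eq_mul, shiftLP_apply,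
      relabel12_apply, Prod.mk_sub_mk, sub_zero, sub_neg_eq_add] at H ⊢
    linear_combination H
  pieri13 j1 j2 j3 h := by
    ext ⟨x1, x2, x3⟩
    have H := congr($(hφ.pieri12 j1 j3 j2 (admissible_swap_right.mpr h)) (x2, x1, x3))
    simp only [Finsupp.add_apply, Finsupp.smul_apply, smul_eq_mul, shiftLP_apply,
      relabel12_apply, Prod.mk_sub_mk, sub_zero, sub_neg_eq_add] at H ⊢
    linear_combination H
  pieri23 j1 j2 j3 h := by
    ext ⟨x1, x2, x3⟩
    have H := congr($(hφ.pieri23 j1 j3 j2 (admissible_swap_right.mpr h)) (x2, x1, x3))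
    simp only [Finsupp.add_apply, Finsupp.smul_apply, smul_eq_mul, shiftLP_apply,
      relabel12_apply, Prod.mk_sub_mk, sub_zero, sub_neg_eq_add] at H ⊢
    simp only [Kc_comm _ _ j2 j3 j1]
    linear_combination H

theorem apply_swap01 (hφ : IsPieriFamily φ) (k1 k2 k3 x1 x2 x3 : ℤ) :
    φ (k2, k1, k3) (x1, x3, x2) = φ (k1, k2, k3) (x1, x2, x3) := by
  rw [← relabel01_apply, hφ.relabel01.unique hφ]

theorem apply_swap12 (hφ : IsPieriFamily φ) (k1 k2 k3 x1 x2 x3 : ℤ) :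
    φ (k1, k3, k2) (x2, x1, x3) = φ (k1, k2, k3) (x1, x2, x3) := by
  rw [← relabel12_apply, hφ.relabel12.unique hφ]

theorem symmetries_eq_top (hφ : IsPieriFamily φ) : symmetries φ = ⊤ := by
  rw [eq_top_iff, ← Equiv.Perm.mclosure_swap_castSucc_succ 2, Submonoid.closure_le]
  rintro _ ⟨i, rfl⟩ j n
  fin_cases i
  · exact hφ.apply_swap01 (j 0) (j 1) (j 2) (n 2) (n 1) (n 0)
  · exact hφ.apply_swap12 (j 0) (j 1) (j 2) (n 2) (n 1) (n 0)

end IsPieriFamily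

/-- Here a triple of exponents is recorded as `n : Fin 3 → ℤ`, where `n k` is the exponent of
the variable `x_{ab}` with `{a,b,k} = {0,1,2}`. -/
theorem genus_two_pieri_symmetry_general (φ : ℤ × ℤ × ℤ → LP) (hφ : IsPieriFamily φ)
    (σ : Equiv.Perm (Fin 3)) (j n : Fin 3 → ℤ) :
    φ (j 0, j 1, j 2) (n 2, n 1, n 0) =
      φ (j (σ 0), j (σ 1), j (σ 2)) (n (σ 2), n (σ 1), n (σ 0)) :=
  ((Submonoid.eq_top_iff' _).mp hφ.symmetries_eq_top σ j n).symm

/-- A family satisfying the genus-two Pieri rule with `φ_{0,0,0} = 1`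
is symmetric under simultaneous permutations of the indices `(j1,j2,j3)` and of the
variables `(x12,x13,x23)`.  Here a triple of exponents is recorded as the function
`n : Fin 3 → ℤ` where `n k` is the exponent of the variable `x_{ab}` with
`{a,b,k} = {0,1,2}` (so the coefficient of `φ_{j1,j2,j3}` on
`x12^{m12} x13^{m13} x23^{m23}` is the value at `(m12, m13, m23) = (n 2, n 1, n 0)`),
and a permutation `σ` relabels both the indices and the variables. -/
theorem genus_two_pieri_symmetry (φ : ℤ × ℤ × ℤ → LP) (hφ : IsPieriFamily φ)
    (σ : Equiv.Perm (Fin 3)) (j n : Fin 3 → ℤ) (hadm : Admissible (j 0, j 1, j 2)) :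
    φ (j 0, j 1, j 2) (n 2, n 1, n 0) =
      φ (j (σ 0), j (σ 1), j (σ 2)) (n (σ 2), n (σ 1), n (σ 0)) :=
  genus_two_pieri_symmetry_general φ hφ σ j n
end

section
/- Let (φ_{j1,j2,j3}) be a family satisfying the genus-two Pieri rule with φ_{0,0,0} = 1. Then for every admissible triple (j1,j2,j3), the evaluation of the Laurent polynomial φ_{j1,j2,j3} at x12 = x13 = x23 = 1 equals 1. -/
/-! The value of `φ_j` at `x12 = x13 = x23 = 1` is the sum of its coefficients, and evaluation
kills the difference between `x + x⁻¹` and `2`. Evaluating a Pieri relation at the admissible triple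
one step below `j` therefore expresses `K_{1,1} · φ_j(1)` through `2 · φ(1)` at that triple and
the values at its three other neighbours, all of smaller total degree. By induction those values
are `1` wherever the neighbour is admissible, and wherever it is not, its coefficient `K_{a,b}`
vanishes. Since the four coefficients `K_{a,b}` always sum to `2` and `K_{1,1} ≠ 0`, this forces
`φ_j(1) = 1`. -/

lemma admissible_iff_triangle (x y z : ℤ) : Admissible (x, y, z) ↔
    0 ≤ x ∧ 0 ≤ y ∧ 0 ≤ z ∧ x ≤ y + z ∧ y ≤ x + z ∧ z ≤ x + y ∧ 2 ∣ x + y + z := by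
  simp only [Admissible, abs_le]
  omega

lemma admissible_swap23 (x y z : ℤ) : Admissible (x, z, y) ↔ Admissible (x, y, z) := by
  rw [admissible_iff_triangle, admissible_iff_triangle]
  omega

lemma admissible_rotate (x y z : ℤ) : Admissible (y, z, x) ↔ Admissible (x, y, z) := by
  rw [admissible_iff_triangle, admissible_iff_triangle]
  omega

lemma Admissible.eq_zero_or_descent {x y z : ℤ} (h : Admissible (x, y, z)) :
    (x = 0 ∧ y = 0 ∧ z = 0) ∨ Admissible (x - 1, y - 1, z) ∨ Admissible (x - 1, y, z - 1) ∨
      Admissible (x, y - 1, z - 1) := by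
  simp only [admissible_iff_triangle] at h ⊢
  omega

lemma Kc_add_Kc_add_Kc_add_Kc {p q : ℤ} (hp : p + 1 ≠ 0) (hq : q + 1 ≠ 0) (r : ℤ) :
    Kc 1 1 p q r + Kc 1 (-1) p q r + Kc (-1) 1 p q r + Kc (-1) (-1) p q r = 2 := by
  have hp' : (p : ℂ) + 1 ≠ 0 := by exact_mod_cast hp
  have hq' : (q : ℂ) + 1 ≠ 0 := by exact_mod_cast hq
  unfold Kc
  push_cast
  field_simp
  ring

lemma Kc_one_one_ne_zero_s4 {p q r : ℤ} (h : Admissible (p, q, r)) : Kc 1 1 p q r ≠ 0 := by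
  rw [admissible_iff_triangle] at h
  have hp : (p : ℂ) + 1 ≠ 0 := by exact_mod_cast (show p + 1 ≠ 0 by omega)
  have hq : (q : ℂ) + 1 ≠ 0 := by exact_mod_cast (show q + 1 ≠ 0 by omega)
  unfold Kc
  refine div_ne_zero (mul_ne_zero (by norm_num) (mul_ne_zero ?_ ?_)) (by simp [hp, hq]) <;>
    exact Int.cast_ne_zero.mpr (by omega)

/-- One of the two linear factors of `K_{a,b}` vanishes on the face of the admissible cone that the
move `(a, b)` would cross. -/
lemma Kc_eq_zero_of_not_admissible {a b p q r : ℤ} (ha : a = 1 ∨ a = -1) (hb : b = 1 ∨ b = -1)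
    (h : Admissible (p, q, r)) (h' : ¬ Admissible (p + a, q + b, r)) : Kc a b p q r = 0 := by
  rw [admissible_iff_triangle] at h h'
  have hfactor : a * p + b * q + r + a + b + 2 = 0 ∨ a * p + b * q - r + a + b = 0 := by
    rcases ha with rfl | rfl <;> rcases hb with rfl | rfl <;> omega
  unfold Kc
  rcases hfactor with hfactor | hfactor <;> simp [hfactor]

noncomputable def coeffSum (p : LP) : ℂ := p.sum fun _ c => c

lemma coeffSum_add (p q : LP) : coeffSum (p + q) = coeffSum p + coeffSum q :=
  Finsupp.sum_add_index' (fun _ => rfl) (fun _ _ _ => rfl)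

lemma coeffSum_smul (c : ℂ) (p : LP) : coeffSum (c • p) = c * coeffSum p := by
  unfold coeffSum
  rw [Finsupp.sum_smul_index (fun _ => rfl), Finsupp.mul_sum]

lemma coeffSum_shiftLP (e : ℤ × ℤ × ℤ) (p : LP) : coeffSum (shiftLP e p) = coeffSum p :=
  Finsupp.sum_mapDomain_index (fun _ => rfl) (fun _ _ _ => rfl)

lemma coeffSum_single (m : ℤ × ℤ × ℤ) (c : ℂ) : coeffSum (Finsupp.single m c) = c :=
  Finsupp.sum_single_index rfl

lemma coeffSum_eq_of_pieri_relation {e e' : ℤ × ℤ × ℤ} {K₁ K₂ K₃ K₄ : ℂ} {p A B C D : LP}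
    (h : shiftLP e p + shiftLP e' p = K₁ • A + K₂ • B + K₃ • C + K₄ • D) :
    K₁ * coeffSum A + K₂ * coeffSum B + K₃ * coeffSum C + K₄ * coeffSum D = 2 * coeffSum p := by
  have h' := congrArg coeffSum h
  simp only [coeffSum_add, coeffSum_smul, coeffSum_shiftLP] at h'
  linear_combination -h'

/-- `f a b` stands for the value at the triple whose two moving coordinates are `a, b` and whose
third coordinate is `r`. -/
lemma eq_one_of_pieri_relation {p q r : ℤ} (f : ℤ → ℤ → ℂ) (hadm : Admissible (p, q, r))
    (hrel : Kc 1 1 p q r * f (p + 1) (q + 1) + Kc 1 (-1) p q r * f (p + 1) (q - 1) +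
      Kc (-1) 1 p q r * f (p - 1) (q + 1) + Kc (-1) (-1) p q r * f (p - 1) (q - 1) = 2 * f p q)
    (hlow : ∀ a b, a + b ≤ p + q → Admissible (a, b, r) → f a b = 1) :
    f (p + 1) (q + 1) = 1 := by
  have hterm : ∀ a b, (a = 1 ∨ a = -1) → (b = 1 ∨ b = -1) → a + b ≤ 0 →
      Kc a b p q r * f (p + a) (q + b) = Kc a b p q r := by
    intro a b ha hb hab
    by_cases h : Admissible (p + a, q + b, r)
    · rw [hlow _ _ (by omega) h, mul_one]
    · rw [Kc_eq_zero_of_not_admissible ha hb hadm h, zero_mul]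
  have h₂ := hterm 1 (-1) (by simp) (by simp) (by simp)
  have h₃ := hterm (-1) 1 (by simp) (by simp) (by simp)
  have h₄ := hterm (-1) (-1) (by simp) (by simp) (by simp)
  simp only [← sub_eq_add_neg] at h₂ h₃ h₄
  have hbase : f p q = 1 := hlow p q le_rfl hadm
  have htri := (admissible_iff_triangle p q r).mp hadm
  have hsum := Kc_add_Kc_add_Kc_add_Kc (p := p) (q := q) (by omega) (by omega) r
  apply mul_left_cancel₀ (Kc_one_one_ne_zero_s4 hadm)
  linear_combination hrel - h₂ - h₃ - h₄ + 2 * hbase - hsum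

theorem IsPieriFamily.coeffSum_eq_one {φ : ℤ × ℤ × ℤ → LP} (hφ : IsPieriFamily φ)
    (j : ℤ × ℤ × ℤ) (hj : Admissible j) : coeffSum (φ j) = 1 := by
  induction hn : (j.1 + j.2.1 + j.2.2).toNat using Nat.strong_induction_on generalizing j with
  | _ n ih =>
    obtain ⟨x, y, z⟩ := j
    have ih' : ∀ j', Admissible j' → j'.1 + j'.2.1 + j'.2.2 < x + y + z - 1 →
        coeffSum (φ j') = 1 := by
      rintro ⟨x', y', z'⟩ h' hlt
      have := (admissible_iff_triangle x' y' z').mp h'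
      exact ih _ (by dsimp only at hn hlt ⊢; omega) _ h' rfl
    rcases hj.eq_zero_or_descent with ⟨rfl, rfl, rfl⟩ | hb | hb | hb
    · rw [hφ.init, coeffSum_single]
    · simpa using eq_one_of_pieri_relation (fun a b => coeffSum (φ (a, b, z))) hb
        (coeffSum_eq_of_pieri_relation (hφ.pieri12 _ _ _ hb))
        (fun a b hab h => ih' _ h (by simp only; omega))
    · simpa using eq_one_of_pieri_relation (fun a c => coeffSum (φ (a, y, c)))
        ((admissible_swap23 _ _ _).mpr hb)
        (coeffSum_eq_of_pieri_relation (hφ.pieri13 _ _ _ hb))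
        (fun a c hac h => ih' _ ((admissible_swap23 _ _ _).mp h) (by simp only; omega))
    · simpa using eq_one_of_pieri_relation (fun b c => coeffSum (φ (x, b, c)))
        ((admissible_rotate _ _ _).mpr hb)
        (coeffSum_eq_of_pieri_relation (hφ.pieri23 _ _ _ hb))
        (fun b c hbc h => ih' _ ((admissible_rotate _ _ _).mp h) (by simp only; omega))

/-- For a family satisfying the genus-two Pieri rule with
`φ_{0,0,0} = 1`, the evaluation of `φ_{j1,j2,j3}` at `x12 = x13 = x23 = 1`
(i.e. the sum of its coefficients) equals `1`, for every admissible triple. -/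
theorem genus_two_pieri_value_at_one (φ : ℤ × ℤ × ℤ → LP) (hφ : IsPieriFamily φ)
    (j : ℤ × ℤ × ℤ) (hadm : Admissible j) :
    ((φ j).sum fun _ c => c) = 1 :=
  hφ.coeffSum_eq_one j hadm
end

section
/- Let Λ1, Λ2, Λ3 ∈ ℂ satisfy |Λ1·Λ2| < 1, |Λ1·Λ3| < 1 and |Λ2·Λ3| < 1. Then the family (Λ1^{j1}·Λ2^{j2}·Λ3^{j3})_{(j1,j2,j3)∈J}, indexed by admissible triples, is absolutely summable and Σ_{(j1,j2,j3)∈J} Λ1^{j1}·Λ2^{j2}·Λ3^{j3} = 1 / ((1 − Λ1Λ2)·(1 − Λ1Λ3)·(1 − Λ2Λ3)). -/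
/-!
Admissible triples are exactly the triples `(a + b, a + c, b + c)` with `a b c : ℕ`, the inverse
being `a = (j1 + j2 - j3) / 2` and its permutations. Along this parametrisation the monomial
`Λ1 ^ j1 * Λ2 ^ j2 * Λ3 ^ j3` factors as `(Λ1 * Λ2) ^ a * (Λ1 * Λ3) ^ b * (Λ2 * Λ3) ^ c`, so the
sum is a product of three absolutely convergent geometric series.
-/

theorem HasSum.mul_of_summable_norm {ι ι' R : Type*} [NormedRing R] {f : ι → R} {g : ι' → R}
    {s t : R} (hf : HasSum f s) (hg : HasSum g t) (hf' : Summable fun i => ‖f i‖)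
    (hg' : Summable fun i => ‖g i‖) :
    HasSum (fun x : ι × ι' => f x.1 * g x.2) (s * t) :=
  hf.mul hg (summable_mul_of_summable_norm' hf' hf.summable hg' hg.summable)

theorem summable_norm_pow_mul_pow_mul_pow {R : Type*} [NormedRing R] {x y z : R}
    (hx : ‖x‖ < 1) (hy : ‖y‖ < 1) (hz : ‖z‖ < 1) :
    Summable fun p : ℕ × ℕ × ℕ => ‖x ^ p.1 * (y ^ p.2.1 * z ^ p.2.2)‖ :=
  Summable.mul_norm (g := fun q : ℕ × ℕ => y ^ q.1 * z ^ q.2)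
    (summable_norm_geometric_of_norm_lt_one hx)
    ((summable_norm_geometric_of_norm_lt_one hy).mul_norm
      (summable_norm_geometric_of_norm_lt_one hz))

theorem hasSum_pow_mul_pow_mul_pow {K : Type*} [NormedDivisionRing K] {x y z : K}
    (hx : ‖x‖ < 1) (hy : ‖y‖ < 1) (hz : ‖z‖ < 1) :
    HasSum (fun p : ℕ × ℕ × ℕ => x ^ p.1 * (y ^ p.2.1 * z ^ p.2.2))
      ((1 - x)⁻¹ * ((1 - y)⁻¹ * (1 - z)⁻¹)) := by
  have hyz : HasSum (fun q : ℕ × ℕ => y ^ q.1 * z ^ q.2) ((1 - y)⁻¹ * (1 - z)⁻¹) :=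
    HasSum.mul_of_summable_norm (f := (y ^ ·)) (g := (z ^ ·))
      (hasSum_geometric_of_norm_lt_one hy) (hasSum_geometric_of_norm_lt_one hz)
      (summable_norm_geometric_of_norm_lt_one hy) (summable_norm_geometric_of_norm_lt_one hz)
  exact HasSum.mul_of_summable_norm (f := (x ^ ·)) (g := fun q : ℕ × ℕ => y ^ q.1 * z ^ q.2)
    (hasSum_geometric_of_norm_lt_one hx) hyz (summable_norm_geometric_of_norm_lt_one hx)
    ((summable_norm_geometric_of_norm_lt_one hy).mul_norm
      (summable_norm_geometric_of_norm_lt_one hz))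

def admissibleEquiv : (ℕ × ℕ × ℕ) ≃ {j : ℤ × ℤ × ℤ // Admissible j} where
  toFun p := ⟨(↑(p.1 + p.2.1), ↑(p.1 + p.2.2), ↑(p.2.1 + p.2.2)), by
    simp only [Admissible, abs_le]
    omega⟩
  invFun j := (((j.1.1 + j.1.2.1 - j.1.2.2) / 2).toNat,
    ((j.1.1 + j.1.2.2 - j.1.2.1) / 2).toNat,
    ((j.1.2.1 + j.1.2.2 - j.1.1) / 2).toNat)
  left_inv p := by
    simp only [Prod.ext_iff]
    omega
  right_inv j := by
    obtain ⟨⟨j1, j2, j3⟩, hj⟩ := j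
    simp only [Admissible, abs_le] at hj
    simp only [Subtype.ext_iff, Prod.ext_iff]
    omega

theorem monomial_admissibleEquiv {M : Type*} [DivisionCommMonoid M] (x y z : M)
    (p : ℕ × ℕ × ℕ) :
    x ^ (admissibleEquiv p).1.1 * y ^ (admissibleEquiv p).1.2.1 * z ^ (admissibleEquiv p).1.2.2 =
      (x * y) ^ p.1 * ((x * z) ^ p.2.1 * (y * z) ^ p.2.2) := by
  simp only [admissibleEquiv, Equiv.coe_fn_mk, zpow_natCast, pow_add, mul_pow]
  ac_rfl

/-- For `Λ1, Λ2, Λ3 ∈ ℂ` with `|Λ1Λ2| < 1`, `|Λ1Λ3| < 1`,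
`|Λ2Λ3| < 1`, the family `(Λ1^{j1} Λ2^{j2} Λ3^{j3})` indexed by admissible
triples is absolutely summable and its sum is
`1/((1 − Λ1Λ2)(1 − Λ1Λ3)(1 − Λ2Λ3))`. -/
theorem sum_over_admissible_triples (Λ1 Λ2 Λ3 : ℂ)
    (h12 : ‖Λ1 * Λ2‖ < 1) (h13 : ‖Λ1 * Λ3‖ < 1) (h23 : ‖Λ2 * Λ3‖ < 1) :
    Summable (fun j : {j : ℤ × ℤ × ℤ // Admissible j} =>
      ‖Λ1 ^ j.1.1 * Λ2 ^ j.1.2.1 * Λ3 ^ j.1.2.2‖) ∧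
    ∑' j : {j : ℤ × ℤ × ℤ // Admissible j},
        Λ1 ^ j.1.1 * Λ2 ^ j.1.2.1 * Λ3 ^ j.1.2.2 =
      1 / ((1 - Λ1 * Λ2) * (1 - Λ1 * Λ3) * (1 - Λ2 * Λ3)) := by
  constructor
  · rw [← admissibleEquiv.summable_iff]
    simpa only [Function.comp_def, monomial_admissibleEquiv]
      using summable_norm_pow_mul_pow_mul_pow h12 h13 h23
  · rw [one_div, mul_inv, mul_inv, mul_assoc, ← admissibleEquiv.tsum_eq]
    simpa only [monomial_admissibleEquiv] using (hasSum_pow_mul_pow_mul_pow h12 h13 h23).tsum_eq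
end

section
/- Let j1 ≥ j2 ≥ 0 be integers. Then for all integers a,b with 0 ≤ a ≤ j2 and 0 ≤ b ≤ j1−j2, the coefficients c_{a,b} satisfy the recursion (a+b)·(2·j1 − a − b + 2)·c_{a,b} + 4·(j2−a+2)·(j2−a+1)·c_{a−2,b} + 8·(j2−a+1)·(j1−j2−b+1)·c_{a−1,b−1} + 4·(j1−j2−b+2)·(j1−j2−b+1)·c_{a,b−2} = 0. -/
/-!
On the support, `c_{a,b}` factors as `L(m) · C(j2, a) · C(j1 − j2, b)` with `m = (a + b)/2`, where the
binomial coefficients `C(n, k)` are extended by zero. These satisfy `(n − k + 1) C(n, k − 1) = k C(n, k)`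
for all integers `n, k`, so the three shifted terms of the recursion add up to
`4 (a(a − 1) + 2ab + b(b − 1)) L(m − 1) C C = 8m(2m − 1) L(m − 1) C C`, and the shift relation
`(j1 − m + 1) L(m) = −2(2m − 1) L(m − 1)` of the level factor cancels this against the first term.
-/

/-- Factorial of an integer (meant for nonnegative arguments), as a rational. -/
def zfact (n : ℤ) : ℚ := (Nat.factorial n.toNat : ℚ)

/-- The coefficients `c_{a,b}` (depending on `j1 ≥ j2 ≥ 0`):
`c_{a,b} = (−1)^{(a+b)/2} · (j2!/(a!(j2−a)!)) · ((j1−j2)!/(b!(j1−j2−b)!)) ·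
((j1−(a+b)/2)!/(j1+1)!) · ((a+b)!/((a+b)/2)!)` when `0 ≤ a ≤ j2`,
`0 ≤ b ≤ j1−j2` and `a+b` is even, and `c_{a,b} = 0` otherwise. -/
def cab (j1 j2 a b : ℤ) : ℚ :=
  if 0 ≤ a ∧ a ≤ j2 ∧ 0 ≤ b ∧ b ≤ j1 - j2 ∧ 2 ∣ (a + b) then
    (-1 : ℚ) ^ ((a + b) / 2) * (zfact j2 / (zfact a * zfact (j2 - a))) *
      (zfact (j1 - j2) / (zfact b * zfact (j1 - j2 - b))) *
      (zfact (j1 - (a + b) / 2) / zfact (j1 + 1)) *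
      (zfact (a + b) / zfact ((a + b) / 2))
  else 0

lemma zfact_ne_zero (n : ℤ) : zfact n ≠ 0 := by
  simp [zfact, Nat.factorial_ne_zero]

lemma zfact_add_one {n : ℤ} (hn : 0 ≤ n) : zfact (n + 1) = (n + 1) * zfact n := by
  lift n to ℕ using hn
  rw [zfact, zfact, show ((n : ℤ) + 1).toNat = n + 1 by omega, Nat.factorial_succ,
    Int.toNat_natCast]
  push_cast
  ring

lemma zfact_of_pos {n : ℤ} (hn : 0 < n) : zfact n = n * zfact (n - 1) := by
  simpa using zfact_add_one (n := n - 1) (by omega)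

def zchoose (n k : ℤ) : ℚ :=
  if 0 ≤ k ∧ k ≤ n then zfact n / (zfact k * zfact (n - k)) else 0

lemma sub_add_one_mul_zchoose_sub_one (n k : ℤ) :
    (n - k + 1) * zchoose n (k - 1) = k * zchoose n k := by
  unfold zchoose
  by_cases hk : 0 < k ∧ k ≤ n
  · rw [if_pos (by omega), if_pos (by omega), zfact_of_pos (n := k) (by omega),
      show n - (k - 1) = n - k + 1 by ring, zfact_add_one (n := n - k) (by omega)]
    have hk0 : (k : ℚ) ≠ 0 := by exact_mod_cast hk.1.ne'
    have hnk : ((n - k + 1 : ℤ) : ℚ) ≠ 0 := by exact_mod_cast (show n - k + 1 ≠ 0 by omega)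
    push_cast at hnk ⊢
    field_simp [zfact_ne_zero]
  · rcases (show k = 0 ∨ k = n + 1 ∨ ¬(0 ≤ k - 1 ∧ k - 1 ≤ n) ∧ ¬(0 ≤ k ∧ k ≤ n) by omega)
      with rfl | rfl | ⟨hk1, hk⟩
    · simp
    · simp
    · rw [if_neg hk1, if_neg hk, mul_zero, mul_zero]

lemma sub_add_two_mul_sub_add_one_mul_zchoose_sub_two (n k : ℤ) :
    (n - k + 2) * (n - k + 1) * zchoose n (k - 2) = k * (k - 1) * zchoose n k := by
  have h1 := sub_add_one_mul_zchoose_sub_one n k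
  have h2 := sub_add_one_mul_zchoose_sub_one n (k - 1)
  rw [show k - 1 - 1 = k - 2 by ring] at h2
  push_cast at h2
  linear_combination (n - k + 1) * h2 + (k - 1) * h1

def levelFactor (j1 m : ℤ) : ℚ :=
  (-1 : ℚ) ^ m * (zfact (j1 - m) / zfact (j1 + 1)) * (zfact (2 * m) / zfact m)

lemma sub_add_one_mul_levelFactor {j1 m : ℤ} (hm : 1 ≤ m) (hmj : m ≤ j1) :
    (j1 - m + 1) * levelFactor j1 m = -2 * (2 * m - 1) * levelFactor j1 (m - 1) := by
  unfold levelFactor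
  rw [show j1 - (m - 1) = j1 - m + 1 by ring, zfact_add_one (n := j1 - m) (by omega),
    zfact_of_pos (n := 2 * m) (by omega), zfact_of_pos (n := 2 * m - 1) (by omega),
    show 2 * m - 1 - 1 = 2 * (m - 1) by ring, zfact_of_pos (n := m) (by omega),
    zpow_sub_one₀ (by norm_num : (-1 : ℚ) ≠ 0)]
  have hm0 : (m : ℚ) ≠ 0 := by exact_mod_cast (show m ≠ 0 by omega)
  field_simp [zfact_ne_zero]
  push_cast
  ring

lemma cab_eq_of_add_eq_two_mul {j1 j2 a b m : ℤ} (hm : a + b = 2 * m) :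
    cab j1 j2 a b = levelFactor j1 m * zchoose j2 a * zchoose (j1 - j2) b := by
  unfold cab levelFactor zchoose
  rw [show (a + b) / 2 = m by omega, hm]
  split_ifs <;> first | ring1 | tauto

lemma cab_eq_zero_of_odd {j1 j2 a b : ℤ} (h : ¬ 2 ∣ a + b) : cab j1 j2 a b = 0 := by
  simp [cab, h]

theorem cab_recursion_general (j1 j2 a b : ℤ) (ha0 : 0 ≤ a) (ha : a ≤ j2) (hb0 : 0 ≤ b)
    (hb : b ≤ j1 - j2) :
    (((a + b) * (2 * j1 - a - b + 2) : ℤ) : ℚ) * cab j1 j2 a b +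
      4 * (((j2 - a + 2) * (j2 - a + 1) : ℤ) : ℚ) * cab j1 j2 (a - 2) b +
      8 * (((j2 - a + 1) * (j1 - j2 - b + 1) : ℤ) : ℚ) * cab j1 j2 (a - 1) (b - 1) +
      4 * (((j1 - j2 - b + 2) * (j1 - j2 - b + 1) : ℤ) : ℚ) * cab j1 j2 a (b - 2) = 0 := by
  by_cases hpar : 2 ∣ a + b
  swap
  · rw [cab_eq_zero_of_odd hpar, cab_eq_zero_of_odd (show ¬ 2 ∣ a - 2 + b by omega),
      cab_eq_zero_of_odd (show ¬ 2 ∣ a - 1 + (b - 1) by omega),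
      cab_eq_zero_of_odd (show ¬ 2 ∣ a + (b - 2) by omega)]
    ring
  obtain ⟨m, hm⟩ := hpar
  obtain rfl : b = 2 * m - a := by omega
  rw [cab_eq_of_add_eq_two_mul (m := m) (by ring), cab_eq_of_add_eq_two_mul (m := m - 1) (by ring),
    cab_eq_of_add_eq_two_mul (m := m - 1) (by ring), cab_eq_of_add_eq_two_mul (m := m - 1) (by ring)]
  have hL : (m : ℚ) * ((j1 - m + 1) * levelFactor j1 m) =
      m * (-2 * (2 * m - 1) * levelFactor j1 (m - 1)) := by
    rcases (show m = 0 ∨ 1 ≤ m by omega) with rfl | hm1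
    · simp
    · rw [sub_add_one_mul_levelFactor hm1 (by omega)]
  have hC1 := sub_add_one_mul_zchoose_sub_one j2 a
  have hC2 := sub_add_two_mul_sub_add_one_mul_zchoose_sub_two j2 a
  have hD1 := sub_add_one_mul_zchoose_sub_one (j1 - j2) (2 * m - a)
  have hD2 := sub_add_two_mul_sub_add_one_mul_zchoose_sub_two (j1 - j2) (2 * m - a)
  push_cast at hC1 hD1 hC2 hD2 ⊢
  set W := levelFactor j1 (m - 1)
  set C := zchoose j2 a
  set D := zchoose (j1 - j2) (2 * m - a)
  linear_combination 4 * W * D * hC2 + 4 * W * C * hD2 + 4 * C * D * hL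
    + 8 * (j1 - j2 - (2 * m - a) + 1) * W * zchoose (j1 - j2) (2 * m - a - 1) * hC1
    + 8 * a * W * C * hD1

/-- For integers `j1 ≥ j2 ≥ 0` and all `0 ≤ a ≤ j2`,
`0 ≤ b ≤ j1−j2`, the coefficients `c_{a,b}` satisfy the recursion
`(a+b)(2j1−a−b+2)c_{a,b} + 4(j2−a+2)(j2−a+1)c_{a−2,b}
 + 8(j2−a+1)(j1−j2−b+1)c_{a−1,b−1} + 4(j1−j2−b+2)(j1−j2−b+1)c_{a,b−2} = 0`. -/
theorem cab_recursion (j1 j2 a b : ℤ) (h2 : 0 ≤ j2) (h12 : j2 ≤ j1)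
    (ha0 : 0 ≤ a) (ha : a ≤ j2) (hb0 : 0 ≤ b) (hb : b ≤ j1 - j2) :
    (((a + b) * (2 * j1 - a - b + 2) : ℤ) : ℚ) * cab j1 j2 a b +
      4 * (((j2 - a + 2) * (j2 - a + 1) : ℤ) : ℚ) * cab j1 j2 (a - 2) b +
      8 * (((j2 - a + 1) * (j1 - j2 - b + 1) : ℤ) : ℚ) * cab j1 j2 (a - 1) (b - 1) +
      4 * (((j1 - j2 - b + 2) * (j1 - j2 - b + 1) : ℤ) : ℚ) * cab j1 j2 a (b - 2) = 0 :=
  cab_recursion_general j1 j2 a b ha0 ha hb0 hb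
end

section
/- Let j1 ≥ j2 ≥ 0 be integers. Then Σ_{a=0}^{j2} Σ_{b=0}^{j1−j2} c_{a,b}·2^{j1−a−b} = 1. -/
/-! Writing `n = j1`, `m = j2`, the summand `c_{a,b} 2^{n-a-b}` is `C(m,a) C(n-m,b) w(a+b)` for a
weight `w` depending only on `a + b`, so Vandermonde's identity collapses the double sum to
`∑_k C(n,k) w(k)`. Only even `k = 2s` contribute, with
`C(n,2s) w(2s) = (-1)^s C(n-s,s) 2^(n-2s) / (n+1)`, and `∑_s (-1)^s C(n-s,s) 2^(n-2s)` is the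
Chebyshev value `U_n(1) = n + 1`. -/

open Finset Polynomial

namespace Polynomial.Chebyshev

variable {R : Type*} [CommRing R]

lemma U_sum_term_recurrence (y : R) (n s : ℕ) :
    (-1) ^ (s + 1) * ((n + 2 - (s + 1)).choose (s + 1) : R) * y ^ (n + 2 - 2 * (s + 1)) =
      y * ((-1) ^ (s + 1) * ((n + 1 - (s + 1)).choose (s + 1) : R) * y ^ (n + 1 - 2 * (s + 1))) -
        (-1) ^ s * ((n - s).choose s : R) * y ^ (n - 2 * s) := by
  rcases le_or_gt s n with hsn | hns
  · have hpascal :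
        (n + 2 - (s + 1)).choose (s + 1) = (n - s).choose s + (n - s).choose (s + 1) := by
      rw [show n + 2 - (s + 1) = n - s + 1 by omega, Nat.choose_succ_succ]
    have hpow : ((n - s).choose (s + 1) : R) * (y * y ^ (n + 1 - 2 * (s + 1))) =
        (n - s).choose (s + 1) * y ^ (n - 2 * s) := by
      rcases le_or_gt (2 * s + 1) n with h | h
      · rw [← pow_succ', show n + 1 - 2 * (s + 1) + 1 = n - 2 * s by omega]
      · rw [Nat.choose_eq_zero_of_lt (by omega : n - s < s + 1), Nat.cast_zero, zero_mul, zero_mul]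
    rw [hpascal, Nat.cast_add, show n + 1 - (s + 1) = n - s by omega,
      show n + 2 - 2 * (s + 1) = n - 2 * s by omega]
    linear_combination (-1) ^ s * hpow
  · simp [Nat.choose_eq_zero_of_lt, show n + 2 - (s + 1) = 0 by omega,
      show n + 1 - (s + 1) = 0 by omega, show n - s = 0 by omega, show 0 < s by omega]

-- The summands with `2 * s > n`, where `n - 2 * s` truncates, vanish since `n - s < s`.
theorem U_eval_eq_sum (n : ℕ) (x : R) :
    (U R n).eval x =
      ∑ s ∈ range (n + 1), (-1) ^ s * ((n - s).choose s : R) * (2 * x) ^ (n - 2 * s) := by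
  induction n using Nat.twoStepInduction with
  | zero => simp
  | one => simp [sum_range_succ]
  | more n ih₀ ih₁ =>
    have hlast : (-1) ^ (n + 1 + 1) * ((n + 2 - (n + 1 + 1)).choose (n + 1 + 1) : R) *
        (2 * x) ^ (n + 2 - 2 * (n + 1 + 1)) = 0 := by
      simp
    push_cast at ih₁ ⊢
    rw [U_add_two, eval_sub, eval_mul, eval_mul, eval_X, eval_ofNat, ih₀, ih₁,
      sum_range_succ' _ (n + 1), sum_range_succ' _ (n + 2), sum_range_succ _ (n + 1), hlast,
      add_zero, mul_add, mul_sum, add_sub_right_comm, ← sum_sub_distrib]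
    congr 1
    · exact sum_congr rfl fun s _ ↦ (U_sum_term_recurrence (2 * x) n s).symm
    · simp [pow_succ']

end Polynomial.Chebyshev

namespace Finset

lemma sum_range_two_mul_of_odd_eq_zero {M : Type*} [AddCommMonoid M] {f : ℕ → M}
    (hf : ∀ i, f (2 * i + 1) = 0) (N : ℕ) :
    ∑ k ∈ range (2 * N), f k = ∑ i ∈ range N, f (2 * i) := by
  induction N with
  | zero => simp
  | succ N ih => rw [mul_add_one, sum_range_succ, sum_range_succ, hf, add_zero, ih, sum_range_succ]

lemma sum_range_choose_mul_choose_mul {R : Type*} [CommSemiring R] (m l : ℕ) (H : ℕ → R) :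
    ∑ a ∈ range (m + 1), ∑ b ∈ range (l + 1), (m.choose a * l.choose b : R) * H (a + b) =
      ∑ k ∈ range (m + l + 1), ((m + l).choose k : R) * H k := by
  rw [← sum_product' (f := fun a b ↦ (m.choose a * l.choose b : R) * H (a + b)),
    ← sum_fiberwise_of_maps_to (g := fun p ↦ p.1 + p.2) (t := range (m + l + 1))
      (by simp only [mem_product, mem_range]; omega)]
  refine sum_congr rfl fun k _ ↦ ?_
  rw [Nat.add_choose_eq, Nat.cast_sum, sum_mul]
  refine sum_subset_zero_on_sdiff ?_ ?_ ?_
  · intro p hp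
    simp only [mem_filter] at hp
    exact HasAntidiagonal.mem_antidiagonal.2 hp.2
  · intro p hp
    simp only [mem_sdiff, mem_filter, mem_product, mem_range, HasAntidiagonal.mem_antidiagonal,
      not_and] at hp
    rcases le_or_gt p.1 m with h | h
    · simp [Nat.choose_eq_zero_of_lt (by omega : l < p.2)]
    · simp [Nat.choose_eq_zero_of_lt h]
  · intro p hp
    simp only [mem_filter] at hp
    simp [hp.2]

lemma sum_Icc_zero_natCast {M : Type*} [AddCommMonoid M] (N : ℕ) (f : ℤ → M) :
    ∑ a ∈ Icc (0 : ℤ) N, f a = ∑ a ∈ range (N + 1), f a := by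
  rw [Int.Icc_eq_finset_map, sum_map]
  simp

end Finset

lemma zfact_natCast (n : ℕ) : zfact n = n.factorial := by simp [zfact]

/-- `c_{a,b} 2^{n-a-b}` with the factors `C(j2,a)` and `C(j1-j2,b)` removed, at `k = a + b`. -/
noncomputable def cabWeight (n k : ℕ) : ℚ :=
  if 2 ∣ k then
    (-1) ^ (k / 2) * (n - k / 2).factorial * k.factorial /
      ((n + 1).factorial * (k / 2).factorial) * 2 ^ (n - k)
  else 0

lemma cab_mul_two_zpow {m l a b : ℕ} (ha : a ≤ m) (hb : b ≤ l) :
    cab ↑(m + l) m a b * (2 : ℚ) ^ ((↑(m + l) : ℤ) - a - b) =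
      m.choose a * l.choose b * cabWeight (m + l) (a + b) := by
  unfold cab cabWeight
  by_cases hk : 2 ∣ a + b
  · obtain ⟨s, hs⟩ := hk
    rw [if_pos (by omega), if_pos ⟨s, hs⟩, hs, Nat.mul_div_cancel_left s two_pos,
      show ((a : ℤ) + b) / 2 = s by omega, show (a : ℤ) + b = ↑(2 * s) by push_cast; omega,
      show (m : ℤ) - a = ↑(m - a) by omega, show (↑(m + l) : ℤ) - m = l by push_cast; ring,
      show (l : ℤ) - b = ↑(l - b) by omega,
      show (↑(m + l) : ℤ) - s = ↑(m + l - s) by omega,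
      show (↑(m + l) : ℤ) + 1 = ↑(m + l + 1) by push_cast; ring,
      show (↑(m + l) : ℤ) - a - b = ↑(m + l - 2 * s) by omega]
    simp only [zfact_natCast, zpow_natCast, Nat.cast_choose ℚ ha, Nat.cast_choose ℚ hb]
    field_simp
  · rw [if_neg (by omega), if_neg hk, zero_mul, mul_zero]

lemma choose_mul_cabWeight_two_mul (n s : ℕ) :
    n.choose (2 * s) * cabWeight n (2 * s) =
      (-1) ^ s * (n - s).choose s * 2 ^ (n - 2 * s) / (n + 1) := by
  rcases le_or_gt (2 * s) n with h | h
  · rw [cabWeight, if_pos (dvd_mul_right 2 s), Nat.mul_div_cancel_left s two_pos,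
      Nat.cast_choose ℚ h, Nat.cast_choose ℚ (by omega : s ≤ n - s), Nat.factorial_succ,
      show n - s - s = n - 2 * s by omega]
    push_cast
    field_simp
  · rw [Nat.choose_eq_zero_of_lt h, Nat.choose_eq_zero_of_lt (by omega : n - s < s)]
    simp

lemma sum_choose_mul_cabWeight (n : ℕ) :
    ∑ k ∈ range (n + 1), n.choose k * cabWeight n k = 1 := by
  have hodd (i : ℕ) : (n.choose (2 * i + 1) : ℚ) * cabWeight n (2 * i + 1) = 0 := by
    rw [cabWeight, if_neg (by omega), mul_zero]
  calc
    _ = ∑ k ∈ range (2 * (n + 1)), (n.choose k : ℚ) * cabWeight n k := by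
      refine sum_subset (range_subset_range.2 (by omega)) fun k hk hkn ↦ ?_
      rw [Nat.choose_eq_zero_of_lt (by simpa using hkn), Nat.cast_zero, zero_mul]
    _ = ∑ s ∈ range (n + 1), (-1 : ℚ) ^ s * (n - s).choose s * 2 ^ (n - 2 * s) / (n + 1) := by
      rw [sum_range_two_mul_of_odd_eq_zero hodd]
      exact sum_congr rfl fun s _ ↦ choose_mul_cabWeight_two_mul n s
    _ = (Chebyshev.U ℚ n).eval 1 / (n + 1) := by
      rw [Chebyshev.U_eval_eq_sum, sum_div, mul_one]
    _ = 1 := by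
      rw [Chebyshev.U_eval_one]
      push_cast
      field_simp

/-- For integers `j1 ≥ j2 ≥ 0`:
`Σ_{a=0}^{j2} Σ_{b=0}^{j1−j2} c_{a,b}·2^{j1−a−b} = 1`. -/
theorem cab_normalization (j1 j2 : ℤ) (h2 : 0 ≤ j2) (h12 : j2 ≤ j1) :
    ∑ a ∈ Finset.Icc (0 : ℤ) j2, ∑ b ∈ Finset.Icc (0 : ℤ) (j1 - j2),
      cab j1 j2 a b * (2 : ℚ) ^ (j1 - a - b) = 1 := by
  lift j2 to ℕ using h2 with m
  obtain ⟨l, rfl⟩ : ∃ l : ℕ, j1 = ↑(m + l) := ⟨(j1 - m).toNat, by push_cast; omega⟩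
  rw [show (↑(m + l) : ℤ) - m = l by push_cast; ring, sum_Icc_zero_natCast]
  calc
    _ = ∑ a ∈ range (m + 1), ∑ b ∈ range (l + 1),
          (m.choose a * l.choose b : ℚ) * cabWeight (m + l) (a + b) := by
      refine sum_congr rfl fun a ha ↦ ?_
      rw [sum_Icc_zero_natCast]
      exact sum_congr rfl fun b hb ↦
        cab_mul_two_zpow (Nat.lt_succ_iff.1 (mem_range.1 ha)) (Nat.lt_succ_iff.1 (mem_range.1 hb))
    _ = 1 := by rw [sum_range_choose_mul_choose_mul, sum_choose_mul_cabWeight]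
end

section
/- Fix a nonnegative integer n and let g(x,y) = (1 − (y/x)^{n+1})·(1 − (xy)^{n+1}) / ((n+1)·y^{n}·(1 − y/x)·(1 − xy)). Then for all x, y ∈ ℂ∖{0, 1, −1} with y ≠ x and x·y ≠ 1, the identity D g = (n+1)²·g holds at (x,y). -/
/-!
With `s = y / x` and `t = x y` the function is `g = φ(s) φ(t) / ((n + 1) yⁿ)`, where
`φ = 1 + X + ⋯ + Xⁿ`. The Euler operators `x ∂ₓ` and `y ∂ᵧ` act on functions `a(s) b(t) / yⁿ`
(with `a`, `b` polynomials) through the Euler derivative `δ = X d/dX` of `a` and `b`, so `D g` is a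
combination of the values `δⁱφ(s) δʲφ(t) / yⁿ` with `i + j ≤ 2`. Differentiating
`(1 - X) φ = 1 - Xⁿ⁺¹` twice gives `(X - 1) δ²φ = n X φ - (X + 1 - n (X - 1)) δφ`; eliminating
`δ²φ(s)` and `δ²φ(t)` with it turns `D g = (n + 1)² g` into an identity of rational functions.
-/

/-- Partial derivative in the first variable of a (curried) function of two
complex variables. -/
noncomputable def p1 (f : ℂ → ℂ → ℂ) (x y : ℂ) : ℂ := deriv (fun t => f t y) x

/-- Partial derivative in the second variable. -/
noncomputable def p2 (f : ℂ → ℂ → ℂ) (x y : ℂ) : ℂ := deriv (fun t => f x t) y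

/-- The genus-two operator `Ĥ1` specialized at `x23 = 1` (variables `x = x12`,
`y = x13`):
`D f = x²f_xx + y²f_yy + ((2(x²+1)(y²+1) − 8xy)/((x−x⁻¹)(y−y⁻¹)))f_xy
 + ((3x²+1)/(x−x⁻¹))f_x + ((3y²+1)/(y−y⁻¹))f_y + f`. -/
noncomputable def Dop (f : ℂ → ℂ → ℂ) (x y : ℂ) : ℂ :=
  x ^ 2 * p1 (p1 f) x y + y ^ 2 * p2 (p2 f) x y +
    ((2 * (x ^ 2 + 1) * (y ^ 2 + 1) - 8 * x * y) / ((x - x⁻¹) * (y - y⁻¹))) * p1 (p2 f) x y +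
    ((3 * x ^ 2 + 1) / (x - x⁻¹)) * p1 f x y +
    ((3 * y ^ 2 + 1) / (y - y⁻¹)) * p2 f x y + f x y

open Filter Topology Polynomial Finset

noncomputable def eulerDeriv {R : Type*} [CommSemiring R] (p : R[X]) : R[X] := X * derivative p

noncomputable def geomPoly {R : Type*} [Semiring R] (n : ℕ) : R[X] := ∑ i ∈ range (n + 1), X ^ i

theorem geomPoly_eulerDeriv_eq {R : Type*} [CommRing R] (n : ℕ) :
    (X - 1) * eulerDeriv (eulerDeriv (geomPoly n : R[X])) =
      (n : R[X]) * X * geomPoly n - (X + 1 - (n : R[X]) * (X - 1)) * eulerDeriv (geomPoly n) := by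
  have h0 : (1 - X) * geomPoly n = (1 - X ^ (n + 1) : R[X]) := mul_neg_geom_sum X (n + 1)
  have h1 : -X * geomPoly n + (1 - X) * eulerDeriv (geomPoly n) =
      -(((n : R[X]) + 1) * X ^ (n + 1)) := by
    have h := congrArg eulerDeriv h0
    simp only [eulerDeriv, derivative_mul, derivative_sub, derivative_one, derivative_X,
      derivative_X_pow_succ, map_add, map_natCast, map_one] at h ⊢
    linear_combination h
  have h2 := congrArg eulerDeriv h1
  simp only [eulerDeriv, derivative_mul, derivative_neg, derivative_sub, derivative_one,
    derivative_X, derivative_X_pow_succ, derivative_natCast, map_add, map_natCast,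
    map_one] at h1 h2 ⊢
  linear_combination ((n : R[X]) + 1) * h1 - h2

theorem deriv_deriv_eq_of_euler {𝕜 : Type*} [NontriviallyNormedField 𝕜] {f g : 𝕜 → 𝕜} {h x : 𝕜}
    (hx : x ≠ 0) (hf : deriv f =ᶠ[𝓝 x] fun t => g t / t) (hg : HasDerivAt g (h / x) x) :
    deriv (deriv f) x = (h - g x) / x ^ 2 := by
  rw [hf.deriv_eq, (hg.fun_div (hasDerivAt_id' x) hx).deriv]
  field_simp

section PairEval

variable (n : ℕ) (p q : ℂ[X]) {x y : ℂ}

noncomputable def pairEval (x y : ℂ) : ℂ := p.eval (y / x) * q.eval (x * y) / y ^ n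

noncomputable def eulerX (x y : ℂ) : ℂ :=
  pairEval n p (eulerDeriv q) x y - pairEval n (eulerDeriv p) q x y

noncomputable def eulerY (x y : ℂ) : ℂ :=
  pairEval n (eulerDeriv p) q x y + pairEval n p (eulerDeriv q) x y - n * pairEval n p q x y

theorem hasDerivAt_pairEval_fst (hx : x ≠ 0) :
    HasDerivAt (fun t => pairEval n p q t y) (eulerX n p q x y / x) x := by
  have hs : HasDerivAt (fun t => y / t) (-(y / x ^ 2)) x := by
    simpa [div_eq_mul_inv] using (hasDerivAt_inv hx).const_mul y
  have ht : HasDerivAt (fun t => t * y) y x := by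
    simpa using (hasDerivAt_id x).mul_const y
  refine ((((p.hasDerivAt _).comp x hs).mul ((q.hasDerivAt _).comp x ht)).div_const _).congr_deriv
    ?_
  simp only [eulerX, pairEval, eulerDeriv, eval_mul, eval_X, Function.comp_apply]
  field_simp
  ring

theorem hasDerivAt_pairEval_snd (hy : y ≠ 0) :
    HasDerivAt (fun u => pairEval n p q x u) (eulerY n p q x y / y) y := by
  have hs : HasDerivAt (fun u => u / x) (1 / x) y := (hasDerivAt_id y).div_const x
  have ht : HasDerivAt (fun u => x * u) x y := by
    simpa using (hasDerivAt_id y).const_mul x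
  have hpow : HasDerivAt (fun u => u ^ n) (n * y ^ n / y) y := by
    simpa [zpow_sub_one₀ hy, div_eq_mul_inv, mul_assoc] using hasDerivAt_zpow n y (.inl hy)
  refine ((((p.hasDerivAt _).comp y hs).mul ((q.hasDerivAt _).comp y ht)).div hpow
    (pow_ne_zero n hy)).congr_deriv ?_
  simp only [eulerY, pairEval, eulerDeriv, eval_mul, eval_X, Function.comp_apply, Pi.mul_apply]
  field_simp

theorem hasDerivAt_eulerX_fst (hx : x ≠ 0) :
    HasDerivAt (fun t => eulerX n p q t y)
      ((eulerX n p (eulerDeriv q) x y - eulerX n (eulerDeriv p) q x y) / x) x :=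
  ((hasDerivAt_pairEval_fst n p _ hx).sub (hasDerivAt_pairEval_fst n _ q hx)).congr_deriv
    (by ring)

theorem hasDerivAt_eulerY_fst (hx : x ≠ 0) :
    HasDerivAt (fun t => eulerY n p q t y)
      ((eulerX n (eulerDeriv p) q x y + eulerX n p (eulerDeriv q) x y - n * eulerX n p q x y) / x)
      x :=
  (((hasDerivAt_pairEval_fst n _ q hx).add (hasDerivAt_pairEval_fst n p _ hx)).sub
    ((hasDerivAt_pairEval_fst n p q hx).const_mul _)).congr_deriv (by ring)

theorem hasDerivAt_eulerY_snd (hy : y ≠ 0) :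
    HasDerivAt (fun u => eulerY n p q x u)
      ((eulerY n (eulerDeriv p) q x y + eulerY n p (eulerDeriv q) x y - n * eulerY n p q x y) / y)
      y :=
  (((hasDerivAt_pairEval_snd n _ q hy).add (hasDerivAt_pairEval_snd n p _ hy)).sub
    ((hasDerivAt_pairEval_snd n p q hy).const_mul _)).congr_deriv (by ring)

theorem p1_pairEval (hx : x ≠ 0) : p1 (pairEval n p q) x y = eulerX n p q x y / x :=
  (hasDerivAt_pairEval_fst n p q hx).deriv

theorem p2_pairEval (hy : y ≠ 0) : p2 (pairEval n p q) x y = eulerY n p q x y / y :=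
  (hasDerivAt_pairEval_snd n p q hy).deriv

theorem p1_p1_pairEval (hx : x ≠ 0) :
    p1 (p1 (pairEval n p q)) x y =
      (eulerX n p (eulerDeriv q) x y - eulerX n (eulerDeriv p) q x y - eulerX n p q x y) / x ^ 2 :=
  deriv_deriv_eq_of_euler hx
    ((eventually_ne_nhds hx).mono fun _ ht => p1_pairEval n p q ht)
    (hasDerivAt_eulerX_fst n p q hx)

theorem p2_p2_pairEval (hy : y ≠ 0) :
    p2 (p2 (pairEval n p q)) x y =
      (eulerY n (eulerDeriv p) q x y + eulerY n p (eulerDeriv q) x y - n * eulerY n p q x y -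
        eulerY n p q x y) / y ^ 2 :=
  deriv_deriv_eq_of_euler hy
    ((eventually_ne_nhds hy).mono fun _ hu => p2_pairEval n p q hu)
    (hasDerivAt_eulerY_snd n p q hy)

theorem p1_p2_pairEval (hx : x ≠ 0) (hy : y ≠ 0) :
    p1 (p2 (pairEval n p q)) x y =
      (eulerX n (eulerDeriv p) q x y + eulerX n p (eulerDeriv q) x y - n * eulerX n p q x y) /
        (x * y) := by
  have h : (fun t => p2 (pairEval n p q) t y) =ᶠ[𝓝 x] fun t => eulerY n p q t y / y :=
    Eventually.of_forall fun _ => p2_pairEval n p q hy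
  rw [p1, h.deriv_eq, ((hasDerivAt_eulerY_fst n p q hx).div_const y).deriv, div_div]

end PairEval

section Locality

variable {f g : ℂ → ℂ → ℂ} {x y : ℂ}

theorem p1_congr (h : Function.uncurry f =ᶠ[𝓝 (x, y)] Function.uncurry g) : p1 f x y = p1 g x y :=
  EventuallyEq.deriv_eq
    (h.comp_tendsto (Continuous.tendsto (f := fun t : ℂ => (t, y)) (by fun_prop) x) :)

theorem p2_congr (h : Function.uncurry f =ᶠ[𝓝 (x, y)] Function.uncurry g) : p2 f x y = p2 g x y :=
  EventuallyEq.deriv_eq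
    (h.comp_tendsto (Continuous.tendsto (f := fun u : ℂ => (x, u)) (by fun_prop) y) :)

theorem p1_eventuallyEq (h : Function.uncurry f =ᶠ[𝓝 (x, y)] Function.uncurry g) :
    Function.uncurry (p1 f) =ᶠ[𝓝 (x, y)] Function.uncurry (p1 g) :=
  h.eventuallyEq_nhds.mono fun _ hz => p1_congr hz

theorem p2_eventuallyEq (h : Function.uncurry f =ᶠ[𝓝 (x, y)] Function.uncurry g) :
    Function.uncurry (p2 f) =ᶠ[𝓝 (x, y)] Function.uncurry (p2 g) :=
  h.eventuallyEq_nhds.mono fun _ hz => p2_congr hz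

theorem Dop_congr (h : Function.uncurry f =ᶠ[𝓝 (x, y)] Function.uncurry g) :
    Dop f x y = Dop g x y := by
  rw [Dop, Dop, p1_congr (p1_eventuallyEq h), p2_congr (p2_eventuallyEq h),
    p1_congr (p2_eventuallyEq h), p1_congr h, p2_congr h, show f x y = g x y from h.eq_of_nhds]

end Locality

theorem Dop_div_const (f : ℂ → ℂ → ℂ) (c x y : ℂ) :
    Dop (fun x y => f x y / c) x y = Dop f x y / c := by
  have h1 : ∀ g : ℂ → ℂ → ℂ, p1 (fun x y => g x y / c) = fun x y => p1 g x y / c :=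
    fun g => funext₂ fun _ _ => deriv_div_const _
  have h2 : ∀ g : ℂ → ℂ → ℂ, p2 (fun x y => g x y / c) = fun x y => p2 g x y / c :=
    fun g => funext₂ fun _ _ => deriv_div_const _
  simp only [Dop, h1, h2]
  ring

theorem Dop_pairEval_geomPoly (n : ℕ) {x y : ℂ} (hx : x ≠ 0) (hy : y ≠ 0)
    (hx1 : x ^ 2 ≠ 1) (hy1 : y ^ 2 ≠ 1) :
    Dop (pairEval n (geomPoly n) (geomPoly n)) x y =
      ((n : ℂ) + 1) ^ 2 * pairEval n (geomPoly n) (geomPoly n) x y := by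
  have hs := congrArg (eval (y / x)) (geomPoly_eulerDeriv_eq (R := ℂ) n)
  have ht := congrArg (eval (x * y)) (geomPoly_eulerDeriv_eq (R := ℂ) n)
  simp only [eval_mul, eval_sub, eval_add, eval_X, eval_one, eval_natCast] at hs ht
  rw [Dop, p1_p1_pairEval n _ _ hx, p2_p2_pairEval n _ _ hy, p1_p2_pairEval n _ _ hx hy,
    p1_pairEval n _ _ hx, p2_pairEval n _ _ hy]
  simp only [eulerX, eulerY, pairEval]
  -- In Euler form `D` carries the coefficients `-4 (x - y)² / ((x² - 1)(y² - 1))` and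
  -- `4 (x y - 1)² / ((x² - 1)(y² - 1))` on the second Euler derivatives in `s` and in `t`.
  linear_combination (norm := skip)
    (-4 * x * (y - x) * eval (x * y) (geomPoly n) / ((x ^ 2 - 1) * (y ^ 2 - 1) * y ^ n)) * hs +
    (4 * (x * y - 1) * eval (y / x) (geomPoly n) / ((x ^ 2 - 1) * (y ^ 2 - 1) * y ^ n)) * ht
  have := sub_ne_zero.mpr hx1
  have := sub_ne_zero.mpr hy1
  field_simp
  ring

theorem geomQuotient_eq_pairEval (n : ℕ) {x y : ℂ} (hs : y / x ≠ 1) (ht : x * y ≠ 1) :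
    (1 - (y / x) ^ (n + 1)) * (1 - (x * y) ^ (n + 1)) /
        (((n : ℂ) + 1) * y ^ n * (1 - y / x) * (1 - x * y)) =
      pairEval n (geomPoly n) (geomPoly n) x y / ((n : ℂ) + 1) := by
  rw [pairEval, geomPoly, eval_geom_sum, eval_geom_sum, ← mul_neg_geom_sum (y / x),
    ← mul_neg_geom_sum (x * y)]
  generalize y / x = s at hs ⊢
  generalize x * y = t at ht ⊢
  have := sub_ne_zero.mpr hs.symm
  have := sub_ne_zero.mpr ht.symm
  field_simp

theorem geomQuotient_eventuallyEq_pairEval (n : ℕ) {x y : ℂ} (hx : x ≠ 0) (hs : y / x ≠ 1)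
    (ht : x * y ≠ 1) :
    Function.uncurry (fun x y : ℂ =>
      (1 - (y / x) ^ (n + 1)) * (1 - (x * y) ^ (n + 1)) /
        (((n : ℂ) + 1) * y ^ n * (1 - y / x) * (1 - x * y))) =ᶠ[𝓝 (x, y)]
      Function.uncurry fun x y => pairEval n (geomPoly n) (geomPoly n) x y / ((n : ℂ) + 1) := by
  have hs' : ∀ᶠ z : ℂ × ℂ in 𝓝 (x, y), z.2 / z.1 ≠ 1 :=
    (continuousAt_snd.div continuousAt_fst hx).eventually_ne hs
  have ht' : ∀ᶠ z : ℂ × ℂ in 𝓝 (x, y), z.1 * z.2 ≠ 1 :=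
    (continuousAt_fst.mul continuousAt_snd).eventually_ne ht
  filter_upwards [hs', ht'] with z hzs hzt
  exact geomQuotient_eq_pairEval n hzs hzt

/-- For a fixed nonnegative integer `n`, the function
`g(x,y) = (1 − (y/x)^{n+1})(1 − (xy)^{n+1}) / ((n+1)·y^n·(1 − y/x)(1 − xy))`
satisfies `D g = (n+1)² g` at every point with `x, y ∉ {0,1,−1}`, `y ≠ x`,
`x·y ≠ 1`. -/
theorem Dop_eigenfunction (n : ℕ) (x y : ℂ)
    (hx : x ≠ 0 ∧ x ≠ 1 ∧ x ≠ -1) (hy : y ≠ 0 ∧ y ≠ 1 ∧ y ≠ -1)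
    (hxy : y ≠ x) (hxy1 : x * y ≠ 1) :
    Dop (fun x y : ℂ =>
        (1 - (y / x) ^ (n + 1)) * (1 - (x * y) ^ (n + 1)) /
          (((n : ℂ) + 1) * y ^ n * (1 - y / x) * (1 - x * y))) x y =
      ((n : ℂ) + 1) ^ 2 *
        ((1 - (y / x) ^ (n + 1)) * (1 - (x * y) ^ (n + 1)) /
          (((n : ℂ) + 1) * y ^ n * (1 - y / x) * (1 - x * y))) := by
  obtain ⟨hx0, hx1, hxm1⟩ := hx
  obtain ⟨hy0, hy1, hym1⟩ := hy
  have hs : y / x ≠ 1 := mt (div_eq_one_iff_eq hx0).mp hxy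
  have hloc := geomQuotient_eventuallyEq_pairEval n hx0 hs hxy1
  rw [Dop_congr hloc, Dop_div_const, Dop_pairEval_geomPoly n hx0 hy0 (by simp [hx1, hxm1])
    (by simp [hy1, hym1]), geomQuotient_eq_pairEval n hs hxy1, mul_div_assoc]
end

section
/- For all nonnegative integers u, v and all x, y ∈ ℂ∖{0, 1, −1}: D[(x+x^{−1})^u·(y+y^{−1})^v] = (u+v+1)²·(x+x^{−1})^u·(y+y^{−1})^v − 4·u·(u−1)·(x+x^{−1})^{u−2}·(y+y^{−1})^v − 8·u·v·(x+x^{−1})^{u−1}·(y+y^{−1})^{v−1} − 4·v·(v−1)·(x+x^{−1})^u·(y+y^{−1})^{v−2}, where any term whose integer coefficient u(u−1), uv, or v(v−1) vanishes is interpreted as 0 (so no negative powers of x+x^{−1} or y+y^{−1} actually occur). -/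
theorem natCast_mul_pow_sub_one_mul {R : Type*} [Semiring R] (n : ℕ) (a : R) :
    (n : R) * a ^ (n - 1) * a = n * a ^ n := by
  rcases n with _ | n
  · simp
  · rw [mul_assoc, pow_sub_one_mul n.succ_ne_zero]

theorem natCast_mul_sub_one_mul_pow_sub_two_mul_sq {R : Type*} [Ring R] (n : ℕ) (a : R) :
    ((n * (n - 1) : ℕ) : R) * a ^ (n - 2) * a ^ 2 = n * (n - 1) * a ^ n := by
  rcases lt_or_ge n 2 with hn | hn
  · interval_cases n <;> simp
  · rw [mul_assoc, ← pow_add, Nat.sub_add_cancel hn, Nat.cast_mul, Nat.cast_sub (by omega),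
      Nat.cast_one]

section Field

variable {K : Type*} [Field K] {x : K}

theorem sub_inv_ne_zero (h0 : x ≠ 0) (h1 : x ≠ 1) (hm : x ≠ -1) : x - x⁻¹ ≠ 0 := by
  intro h
  have hsq : x ^ 2 = 1 := by
    field_simp at h
    linear_combination h
  exact (sq_eq_one_iff.mp hsq).elim h1 hm

theorem one_sub_inv_sq_eq_div (hx : x ≠ 0) : 1 - (x ^ 2)⁻¹ = (x - x⁻¹) / x := by
  field_simp

theorem sq_mul_one_sub_inv_sq_sq (hx : x ≠ 0) :
    x ^ 2 * (1 - (x ^ 2)⁻¹) ^ 2 = (x + x⁻¹) ^ 2 - 4 := by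
  field_simp
  ring

end Field

section Derivatives

variable {𝕜 : Type*} [NontriviallyNormedField 𝕜] {x : 𝕜}

theorem hasDerivAt_add_inv (hx : x ≠ 0) :
    HasDerivAt (fun t => t + t⁻¹) (1 - (x ^ 2)⁻¹) x := by
  simpa only [sub_eq_add_neg] using (hasDerivAt_id' x).fun_add (hasDerivAt_inv hx)

theorem hasDerivAt_one_sub_inv_sq (hx : x ≠ 0) :
    HasDerivAt (fun t => 1 - (t ^ 2)⁻¹) (2 / x ^ 3) x := by
  refine (((hasDerivAt_pow 2 x).fun_inv (pow_ne_zero 2 hx)).const_sub 1).congr_deriv ?_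
  field_simp
  ring

theorem hasDerivAt_add_inv_pow (n : ℕ) (hx : x ≠ 0) :
    HasDerivAt (fun t => (t + t⁻¹) ^ n) (n * (x + x⁻¹) ^ (n - 1) * (1 - (x ^ 2)⁻¹)) x :=
  (hasDerivAt_add_inv hx).fun_pow n

theorem hasDerivAt_deriv_add_inv_pow (n : ℕ) (hx : x ≠ 0) :
    HasDerivAt (deriv fun t => (t + t⁻¹) ^ n)
      (((n * (n - 1) : ℕ) : 𝕜) * (x + x⁻¹) ^ (n - 2) * (1 - (x ^ 2)⁻¹) ^ 2 +
        n * (x + x⁻¹) ^ (n - 1) * (2 / x ^ 3)) x := by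
  have hderiv := ((hasDerivAt_add_inv_pow (n - 1) hx).const_mul (n : 𝕜)).fun_mul
    (hasDerivAt_one_sub_inv_sq hx)
  refine HasDerivAt.congr_of_eventuallyEq ?_
    ((eventually_ne_nhds hx).mono fun t ht => (hasDerivAt_add_inv_pow n ht).deriv)
  refine hderiv.congr_deriv ?_
  rw [Nat.sub_sub, Nat.cast_mul]
  ring

end Derivatives

noncomputable def Dop1 (f : ℂ → ℂ) (x : ℂ) : ℂ :=
  x ^ 2 * deriv (deriv f) x + (3 * x ^ 2 + 1) / (x - x⁻¹) * deriv f x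

theorem Dop_mul_apply (f g : ℂ → ℂ) (x y : ℂ) :
    Dop (fun x y => f x * g y) x y =
      Dop1 f x * g y + f x * Dop1 g y +
        (2 * (x ^ 2 + 1) * (y ^ 2 + 1) - 8 * x * y) / ((x - x⁻¹) * (y - y⁻¹)) *
          (deriv f x * deriv g y) + f x * g y := by
  simp only [Dop, Dop1, p1, p2, deriv_mul_const_field', deriv_const_mul_field']
  ring

theorem Dop1_add_inv_pow (n : ℕ) {x : ℂ} (hx : x ≠ 0) (hx' : x - x⁻¹ ≠ 0) :
    Dop1 (fun t => (t + t⁻¹) ^ n) x =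
      ((n : ℂ) ^ 2 + 2 * n) * (x + x⁻¹) ^ n -
        4 * ((n * (n - 1) : ℕ) : ℂ) * (x + x⁻¹) ^ (n - 2) := by
  rw [Dop1, (hasDerivAt_deriv_add_inv_pow n hx).deriv, (hasDerivAt_add_inv_pow n hx).deriv]
  have hsq := sq_mul_one_sub_inv_sq_sq hx
  have hsec : x ^ 2 * (2 / x ^ 3) = 2 * x⁻¹ := by field_simp
  have hcoef : (3 * x ^ 2 + 1) / (x - x⁻¹) * (1 - (x ^ 2)⁻¹) = 3 * x + x⁻¹ := by
    rw [one_sub_inv_sq_eq_div hx, div_mul_div_cancel₀ hx']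
    field_simp
  linear_combination ((n * (n - 1) : ℕ) : ℂ) * (x + x⁻¹) ^ (n - 2) * hsq +
    n * (x + x⁻¹) ^ (n - 1) * (hsec + hcoef) +
    natCast_mul_sub_one_mul_pow_sub_two_mul_sq n (x + x⁻¹) +
    3 * natCast_mul_pow_sub_one_mul n (x + x⁻¹)

theorem mixed_term_add_inv_pow (u v : ℕ) {x y : ℂ} (hx : x ≠ 0) (hy : y ≠ 0)
    (hx' : x - x⁻¹ ≠ 0) (hy' : y - y⁻¹ ≠ 0) :
    (2 * (x ^ 2 + 1) * (y ^ 2 + 1) - 8 * x * y) / ((x - x⁻¹) * (y - y⁻¹)) *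
        (deriv (fun t => (t + t⁻¹) ^ u) x * deriv (fun t => (t + t⁻¹) ^ v) y) =
      2 * u * v * (x + x⁻¹) ^ u * (y + y⁻¹) ^ v -
        8 * ((u * v : ℕ) : ℂ) * (x + x⁻¹) ^ (u - 1) * (y + y⁻¹) ^ (v - 1) := by
  rw [(hasDerivAt_add_inv_pow u hx).deriv, (hasDerivAt_add_inv_pow v hy).deriv]
  have hcoef : (2 * (x ^ 2 + 1) * (y ^ 2 + 1) - 8 * x * y) / ((x - x⁻¹) * (y - y⁻¹)) *
      ((1 - (x ^ 2)⁻¹) * (1 - (y ^ 2)⁻¹)) = 2 * (x + x⁻¹) * (y + y⁻¹) - 8 := by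
    rw [one_sub_inv_sq_eq_div hx, one_sub_inv_sq_eq_div hy, div_mul_div_comm,
      div_mul_div_cancel₀ (mul_ne_zero hx' hy')]
    field_simp
  push_cast
  linear_combination (u : ℂ) * v * (x + x⁻¹) ^ (u - 1) * (y + y⁻¹) ^ (v - 1) * hcoef +
    2 * v * (y + y⁻¹) ^ (v - 1) * (y + y⁻¹) * natCast_mul_pow_sub_one_mul u (x + x⁻¹) +
    2 * u * (x + x⁻¹) ^ u * natCast_mul_pow_sub_one_mul v (y + y⁻¹)

/-- For all nonnegative integers `u, v` and all
`x, y ∉ {0,1,−1}`: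
`D[(x+x⁻¹)^u (y+y⁻¹)^v] = (u+v+1)²(x+x⁻¹)^u(y+y⁻¹)^v
 − 4u(u−1)(x+x⁻¹)^{u−2}(y+y⁻¹)^v − 8uv(x+x⁻¹)^{u−1}(y+y⁻¹)^{v−1}
 − 4v(v−1)(x+x⁻¹)^u(y+y⁻¹)^{v−2}`,
where any term whose integer coefficient `u(u−1)`, `uv` or `v(v−1)` vanishes is
interpreted as `0` (here realized via truncated subtraction of natural number
exponents, which only occurs when the corresponding coefficient is zero). -/
theorem Dop_on_power_basis (u v : ℕ) (x y : ℂ)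
    (hx : x ≠ 0 ∧ x ≠ 1 ∧ x ≠ -1) (hy : y ≠ 0 ∧ y ≠ 1 ∧ y ≠ -1) :
    Dop (fun x y : ℂ => (x + x⁻¹) ^ u * (y + y⁻¹) ^ v) x y =
      ((u : ℂ) + v + 1) ^ 2 * (x + x⁻¹) ^ u * (y + y⁻¹) ^ v -
        4 * ((u * (u - 1) : ℕ) : ℂ) * (x + x⁻¹) ^ (u - 2) * (y + y⁻¹) ^ v -
        8 * ((u * v : ℕ) : ℂ) * (x + x⁻¹) ^ (u - 1) * (y + y⁻¹) ^ (v - 1) -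
        4 * ((v * (v - 1) : ℕ) : ℂ) * (x + x⁻¹) ^ u * (y + y⁻¹) ^ (v - 2) := by
  obtain ⟨hx0, hx1, hxm⟩ := hx
  obtain ⟨hy0, hy1, hym⟩ := hy
  have hx' := sub_inv_ne_zero hx0 hx1 hxm
  have hy' := sub_inv_ne_zero hy0 hy1 hym
  rw [Dop_mul_apply (fun t => (t + t⁻¹) ^ u) (fun t => (t + t⁻¹) ^ v)]
  linear_combination (y + y⁻¹) ^ v * Dop1_add_inv_pow u hx0 hx' +
    (x + x⁻¹) ^ u * Dop1_add_inv_pow v hy0 hy' + mixed_term_add_inv_pow u v hx0 hy0 hx' hy'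
end
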